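/- Let L denote the Rogers dilogarithm. Then L(4√5 − 8) + 4·L(√5 − 2) = π²/3. -/

import Mathlib

open Filter Set Topology Real

/-- The real dilogarithm `Li₂(z) = ∑_{n=1}^∞ zⁿ/n²`. -/
noncomputable def dilog (z : ℝ) : ℝ := ∑' n : ℕ, z ^ (n + 1) / ((n : ℝ) + 1) ^ 2

/-- The (non-normalized) Rogers dilogarithm `L(z) = Li₂(z) + (1/2) log z log (1 - z)`. -/
noncomputable def rogersL (z : ℝ) : ℝ := dilog z + 1 / 2 * Real.log z * Real.log (1 - z)


lemma summable_sq : Summable (fun n : ℕ => 1 / ((n : ℝ) + 1) ^ 2) := by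
  have := Real.summable_one_div_nat_pow.mpr (le_refl 2)
  simpa using (summable_nat_add_iff 1).mpr this

lemma dilog_bound {z : ℝ} (hz : |z| ≤ 1) (n : ℕ) :
    ‖z ^ (n + 1) / ((n : ℝ) + 1) ^ 2‖ ≤ 1 / ((n : ℝ) + 1) ^ 2 := by
  have h1 : (0:ℝ) < ((n : ℝ) + 1) ^ 2 := by positivity
  rw [norm_div, norm_pow, Real.norm_eq_abs, Real.norm_eq_abs, abs_of_pos h1]
  have : |z| ^ (n+1) ≤ 1 := pow_le_one₀ (abs_nonneg z) hz
  gcongr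

lemma summable_dilog {z : ℝ} (hz : |z| ≤ 1) :
    Summable (fun n : ℕ => z ^ (n + 1) / ((n : ℝ) + 1) ^ 2) :=
  Summable.of_norm_bounded summable_sq (dilog_bound hz)

lemma dilog_zero : dilog 0 = 0 := by simp [dilog]

lemma dilog_one : dilog 1 = Real.pi ^ 2 / 6 := by
  have h := hasSum_zeta_two
  rw [← hasSum_nat_add_iff' 1] at h
  simp only [Finset.range_one, Finset.sum_singleton, Nat.cast_zero] at h
  norm_num at h
  have : (fun n : ℕ => (1:ℝ) / ((n:ℝ) + 1) ^ 2) = fun n : ℕ => 1 / ((n:ℕ) + 1 : ℝ) ^ 2 := rfl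
  unfold dilog
  have h2 : HasSum (fun n : ℕ => (1:ℝ) ^ (n + 1) / ((n : ℝ) + 1) ^ 2) (Real.pi ^ 2 / 6) := by
    simpa using h
  exact h2.tsum_eq

lemma continuousOn_dilog : ContinuousOn dilog (Icc (-1 : ℝ) 1) := by
  apply (tendstoUniformlyOn_tsum summable_sq ?_).continuousOn
  · exact Filter.Frequently.of_forall fun t => (continuousOn_finset_sum t fun n _ => by fun_prop)
  · intro n x hx
    exact dilog_bound (abs_le.mpr ⟨hx.1, hx.2⟩) n

lemma aux_bound {x r : ℝ} (hxr : |x| ≤ r) (n : ℕ) : ‖x ^ n / ((n : ℝ) + 1)‖ ≤ r ^ n := by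
  rw [norm_div, norm_pow, Real.norm_eq_abs, Real.norm_eq_abs]
  have h1 : (1:ℝ) ≤ |(n:ℝ)+1| := by
    rw [abs_of_pos (by positivity)]
    have : (0:ℝ) ≤ (n:ℝ) := Nat.cast_nonneg n
    linarith
  calc |x| ^ n / |(n:ℝ)+1| ≤ r ^ n / 1 :=
        div_le_div₀ (pow_nonneg ((abs_nonneg x).trans hxr) n) (pow_le_pow_left₀ (abs_nonneg x) hxr n) one_pos h1
    _ = r ^ n := div_one _

lemma summable_dilog' {z : ℝ} (hz : |z| ≤ 1) :
    Summable (fun n : ℕ => z ^ (n + 1) / ((n : ℝ) + 1) ^ 2) :=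
  Summable.of_norm_bounded summable_sq (dilog_bound hz)

lemma hasDerivAt_dilog {z : ℝ} (h0 : 0 < z) (h1 : z < 1) :
    HasDerivAt dilog (-Real.log (1 - z) / z) z := by
  set r : ℝ := (1 + z) / 2 with hr
  have hr0 : 0 < r := by positivity
  have hzr : z < r := by simp only [hr]; linarith
  have hr1 : r < 1 := by simp only [hr]; linarith
  have hsumr : Summable (fun n : ℕ => r ^ n) := summable_geometric_of_lt_one hr0.le hr1
  have hbound : ∀ (n : ℕ) (x : ℝ), x ∈ Ioo (-r) r → ‖x ^ n / ((n : ℝ) + 1)‖ ≤ r ^ n :=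
    fun n x hx => aux_bound (abs_le.mpr ⟨hx.1.le, hx.2.le⟩) n
  have key : HasDerivAt dilog (∑' n : ℕ, z ^ n / ((n : ℝ) + 1)) z := by
    apply hasDerivAt_of_tendstoUniformlyOn (f := fun (t : Finset ℕ) x =>
        ∑ n ∈ t, x ^ (n + 1) / ((n : ℝ) + 1) ^ 2)
      (f' := fun (t : Finset ℕ) x => ∑ n ∈ t, x ^ n / ((n : ℝ) + 1)) isOpen_Ioo
      (tendstoUniformlyOn_tsum hsumr hbound) ?_ ?_
      (Set.mem_Ioo.mpr ⟨by linarith, hzr⟩)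
    · apply Filter.Eventually.of_forall
      intro t x hx
      apply HasDerivAt.fun_sum
      intro n _
      have hd := (hasDerivAt_pow (n + 1) x).div_const (((n : ℝ) + 1) ^ 2)
      refine hd.congr_deriv ?_
      have hn : ((n : ℝ) + 1) ≠ 0 := by positivity
      rw [Nat.add_sub_cancel]
      push_cast
      field_simp
    · intro x hx
      have hx1 : |x| ≤ 1 := by
        rw [abs_le]; exact ⟨by linarith [hx.1], by linarith [hx.2]⟩
      exact (summable_dilog' hx1).hasSum
  have habs : |z| < 1 := by rw [abs_of_pos h0]; exact h1
  have hlog := Real.hasSum_pow_div_log_of_abs_lt_one habs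
  have hT : Summable (fun n : ℕ => z ^ n / ((n : ℝ) + 1)) :=
    Summable.of_norm_bounded hsumr (fun n => hbound n z ⟨by linarith, hzr⟩)
  have hmul := hT.hasSum.mul_left z
  have hs2 : HasSum (fun n : ℕ => z ^ (n+1) / ((n:ℝ)+1))
      (z * ∑' n : ℕ, z ^ n / ((n : ℝ) + 1)) := by
    have hfun : (fun n : ℕ => z ^ (n+1) / ((n:ℝ)+1)) = fun i : ℕ => z * (z ^ i / ((i:ℝ) + 1)) := by
      funext n; rw [pow_succ]; ring
    rw [hfun]; exact hmul
  have heq : z * ∑' n : ℕ, z ^ n / ((n : ℝ) + 1) = -Real.log (1 - z) := by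
    apply hs2.unique
    convert hlog using 2 with n
  have hfin : (∑' n : ℕ, z ^ n / ((n : ℝ) + 1)) = -Real.log (1 - z) / z := by
    rw [← heq, mul_comm, mul_div_assoc, div_self h0.ne', mul_one]
  rwa [hfin] at key

noncomputable def Lder (z : ℝ) : ℝ :=
  -(1/2) * (Real.log (1 - z) / z + Real.log z / (1 - z))

lemma hasDerivAt_rogersL {z : ℝ} (h0 : 0 < z) (h1 : z < 1) :
    HasDerivAt rogersL (Lder z) z := by
  have h1z : (0:ℝ) < 1 - z := by linarith
  have hlog1 : HasDerivAt (fun x : ℝ => Real.log (1 - x)) (-(1 - z)⁻¹) z := by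
    have := ((hasDerivAt_id z).const_sub 1).log h1z.ne'
    simpa [neg_div, div_eq_mul_inv] using this
  have hlog : HasDerivAt Real.log z⁻¹ z := Real.hasDerivAt_log h0.ne'
  have hprod : HasDerivAt (fun x : ℝ => 1 / 2 * Real.log x * Real.log (1 - x))
      (1 / 2 * (z⁻¹ * Real.log (1 - z) + Real.log z * -(1 - z)⁻¹)) z := by
    have := ((hlog.const_mul (1/2 : ℝ)).mul hlog1)
    refine this.congr_deriv ?_
    ring
  have := (hasDerivAt_dilog h0 h1).add hprod
  have harr : -Real.log (1 - z) / z +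
      1 / 2 * (z⁻¹ * Real.log (1 - z) + Real.log z * -(1 - z)⁻¹) = Lder z := by
    unfold Lder
    field_simp
    ring
  rw [harr] at this
  exact this

lemma const_on_Ioo {f : ℝ → ℝ} (hf : ∀ x ∈ Ioo (0:ℝ) 1, HasDerivAt f 0 x)
    {a b : ℝ} (ha : a ∈ Ioo (0:ℝ) 1) (hb : b ∈ Ioo (0:ℝ) 1) : f a = f b := by
  apply (convex_Ioo (0:ℝ) 1).is_const_of_fderivWithin_eq_zero
    (fun x hx => ((hf x hx).differentiableAt).differentiableWithinAt) ?_ ha hb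
  intro x hx
  rw [fderivWithin_of_isOpen isOpen_Ioo hx]
  have h2 := (hf x hx).hasFDerivAt.fderiv
  rw [h2]
  ext
  simp

lemma Ioo_subset_Icc' : Ioo (0:ℝ) 1 ⊆ Icc (-1:ℝ) 1 :=
  fun x hx => ⟨by linarith [hx.1], hx.2.le⟩

lemma logprod_tendsto_zero :
    Tendsto (fun z : ℝ => Real.log z * Real.log (1 - z)) (𝓝[Ioo (0:ℝ) 1] 0) (𝓝 0) := by
  have hmono : 𝓝[Ioo (0:ℝ) 1] (0:ℝ) ≤ 𝓝[>] (0:ℝ) :=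
    nhdsWithin_mono 0 (fun x hx => hx.1)
  have hxlog : Tendsto (fun x : ℝ => Real.log x * x) (𝓝[Ioo (0:ℝ) 1] 0) (𝓝 0) := by
    have h := tendsto_log_mul_rpow_nhdsGT_zero (r := 1) one_pos
    simp only [Real.rpow_one] at h
    exact h.mono_left hmono
  have hden : Tendsto (fun z : ℝ => 1 - z) (𝓝[Ioo (0:ℝ) 1] 0) (𝓝 1) := by
    have hc : Continuous (fun z : ℝ => 1 - z) := continuous_const.sub continuous_id
    have : Tendsto (fun z : ℝ => 1 - z) (𝓝 (0:ℝ)) (𝓝 1) := by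
      simpa using hc.tendsto (0:ℝ)
    exact this.mono_left nhdsWithin_le_nhds
  have hbig : Tendsto (fun z : ℝ => |Real.log z * z| / (1 - z)) (𝓝[Ioo (0:ℝ) 1] 0) (𝓝 0) := by
    have := (hxlog.abs).div hden one_ne_zero
    simpa [Pi.div_def] using this
  apply squeeze_zero_norm' ?_ hbig
  filter_upwards [self_mem_nhdsWithin] with z hz
  have hz0 : (0:ℝ) < z := hz.1
  have h1z : (0:ℝ) < 1 - z := by linarith [hz.2]
  have hbnd : -Real.log (1 - z) ≤ z / (1 - z) := by
    have h := Real.log_le_sub_one_of_pos (x := (1 - z)⁻¹) (by positivity)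
    rw [Real.log_inv] at h
    have he : (1 - z)⁻¹ - 1 = z / (1 - z) := by field_simp; ring
    linarith
  have hlog1z : Real.log (1 - z) ≤ 0 := Real.log_nonpos h1z.le (by linarith [hz.1])
  rw [Real.norm_eq_abs, abs_mul]
  have h1 : |Real.log (1 - z)| ≤ z / (1 - z) := by
    rw [abs_of_nonpos hlog1z]; exact hbnd
  calc |Real.log z| * |Real.log (1 - z)| ≤ |Real.log z| * (z / (1 - z)) := by
        exact mul_le_mul_of_nonneg_left h1 (abs_nonneg _)
    _ = |Real.log z| * z / (1 - z) := by ring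
    _ = |Real.log z * z| / (1 - z) := by
        rw [abs_mul, abs_of_pos hz0]

lemma tendsto_within_Ioo_of_continuousOn :
    Tendsto dilog (𝓝[Ioo (0:ℝ) 1] 0) (𝓝 0) := by
  have h := (continuousOn_dilog 0 (by norm_num)).tendsto
  rw [dilog_zero] at h
  exact h.mono_left (nhdsWithin_mono 0 Ioo_subset_Icc')

lemma rogersL_tendsto_zero : Tendsto rogersL (𝓝[Ioo (0:ℝ) 1] 0) (𝓝 0) := by
  have h1 := tendsto_within_Ioo_of_continuousOn
  have h2 := logprod_tendsto_zero.const_mul (1/2 : ℝ)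
  have := h1.add h2
  simp only [mul_zero, add_zero] at this
  apply Tendsto.congr ?_ this
  intro z
  unfold rogersL
  ring

lemma map_one_sub_Ioo :
    Tendsto (fun z : ℝ => 1 - z) (𝓝[Ioo (0:ℝ) 1] 1) (𝓝[Ioo (0:ℝ) 1] 0) := by
  rw [tendsto_nhdsWithin_iff]
  constructor
  · have hc : Continuous (fun z : ℝ => 1 - z) := continuous_const.sub continuous_id
    have : Tendsto (fun z : ℝ => 1 - z) (𝓝 (1:ℝ)) (𝓝 0) := by
      simpa using hc.tendsto (1:ℝ)
    exact this.mono_left nhdsWithin_le_nhds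
  · filter_upwards [self_mem_nhdsWithin] with z hz
    exact ⟨by linarith [hz.2], by linarith [hz.1]⟩

lemma rogersL_tendsto_one :
    Tendsto rogersL (𝓝[Ioo (0:ℝ) 1] 1) (𝓝 (Real.pi ^ 2 / 6)) := by
  have h1 : Tendsto dilog (𝓝[Ioo (0:ℝ) 1] 1) (𝓝 (Real.pi ^ 2 / 6)) := by
    have h := (continuousOn_dilog 1 (by norm_num)).tendsto
    rw [dilog_one] at h
    exact h.mono_left (nhdsWithin_mono 1 Ioo_subset_Icc')
  have h2 : Tendsto (fun z : ℝ => Real.log z * Real.log (1 - z))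
      (𝓝[Ioo (0:ℝ) 1] 1) (𝓝 0) := by
    have := logprod_tendsto_zero.comp map_one_sub_Ioo
    apply Tendsto.congr' ?_ this
    filter_upwards [self_mem_nhdsWithin] with z _
    simp only [Function.comp_apply]
    rw [sub_sub_cancel]
    ring
  have h3 := h2.const_mul (1/2 : ℝ)
  have := h1.add h3
  simp only [mul_zero, add_zero] at this
  apply Tendsto.congr ?_ this
  intro z
  unfold rogersL
  ring

lemma neBot_Ioo_zero : (𝓝[Ioo (0:ℝ) 1] (0:ℝ)).NeBot := by
  apply mem_closure_iff_nhdsWithin_neBot.mp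
  rw [closure_Ioo (by norm_num : (0:ℝ) ≠ 1)]
  exact ⟨le_refl 0, by norm_num⟩

lemma map_one_sub_Ioo' :
    Tendsto (fun z : ℝ => 1 - z) (𝓝[Ioo (0:ℝ) 1] 0) (𝓝[Ioo (0:ℝ) 1] 1) := by
  rw [tendsto_nhdsWithin_iff]
  constructor
  · have hc : Continuous (fun z : ℝ => 1 - z) := continuous_const.sub continuous_id
    have : Tendsto (fun z : ℝ => 1 - z) (𝓝 (0:ℝ)) (𝓝 1) := by simpa using hc.tendsto (0:ℝ)
    exact this.mono_left nhdsWithin_le_nhds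
  · filter_upwards [self_mem_nhdsWithin] with z hz
    exact ⟨by linarith [hz.2], by linarith [hz.1]⟩

lemma euler_reflection {z : ℝ} (hz : z ∈ Ioo (0:ℝ) 1) :
    rogersL z + rogersL (1 - z) = Real.pi ^ 2 / 6 := by
  set f : ℝ → ℝ := fun x => rogersL x + rogersL (1 - x) with hf
  have hderiv : ∀ x ∈ Ioo (0:ℝ) 1, HasDerivAt f 0 x := by
    intro x hx
    have hx1 : (1 - x) ∈ Ioo (0:ℝ) 1 := ⟨by linarith [hx.2], by linarith [hx.1]⟩
    have h1 := hasDerivAt_rogersL hx.1 hx.2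
    have h2 : HasDerivAt (fun y : ℝ => rogersL (1 - y)) (Lder (1 - x) * (-1)) x := by
      have hinner : HasDerivAt (fun y : ℝ => 1 - y) (-1) x := by
        simpa using ((hasDerivAt_id x).const_sub 1)
      exact (hasDerivAt_rogersL hx1.1 hx1.2).comp x hinner
    have := h1.add h2
    have hval : Lder x + Lder (1 - x) * (-1) = 0 := by
      unfold Lder
      rw [sub_sub_cancel]
      ring
    rwa [hval] at this
  -- f is constant on Ioo, equal to its limit at 0
  have hconst : ∀ w ∈ Ioo (0:ℝ) 1, f w = f z := fun w hw => const_on_Ioo hderiv hw hz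
  have hlim : Tendsto f (𝓝[Ioo (0:ℝ) 1] 0) (𝓝 (0 + Real.pi ^ 2 / 6)) :=
    Tendsto.add rogersL_tendsto_zero (rogersL_tendsto_one.comp map_one_sub_Ioo')
  have hlim2 : Tendsto f (𝓝[Ioo (0:ℝ) 1] 0) (𝓝 (f z)) := by
    apply Tendsto.congr' ?_ tendsto_const_nhds
    filter_upwards [self_mem_nhdsWithin] with w hw
    exact (hconst w hw).symm
  haveI := neBot_Ioo_zero
  have := tendsto_nhds_unique hlim2 hlim
  rw [zero_add] at this
  exact this

lemma abel_alg (x y a b c d e : ℝ) (hx : x ≠ 0) (hx1 : 1 - x ≠ 0) (hy : y ≠ 0)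
    (hy1 : 1 - y ≠ 0) (hxy1 : 1 - x * y ≠ 0) :
    -(1/2) * (c / x + a / (1 - x))
      - (-(1/2) * (e / (x * y) + (a + b) / (1 - x * y))) * y
      - (-(1/2) * ((c - e) / (x * (1 - y) / (1 - x * y)) + (a + d - e) / (1 - x * (1 - y) / (1 - x * y))))
          * (((1 - y) * (1 - x * y) - x * (1 - y) * (-y)) / (1 - x * y) ^ 2)
      - (-(1/2) * ((d - e) / (y * (1 - x) / (1 - x * y)) + (b + c - e) / (1 - y * (1 - x) / (1 - x * y))))
          * ((-y * (1 - x * y) - y * (1 - x) * (-y)) / (1 - x * y) ^ 2) = 0 := by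
  have h1 : 1 - x * (1 - y) / (1 - x * y) = (1 - x) / (1 - x * y) := by field_simp; ring
  have h2 : 1 - y * (1 - x) / (1 - x * y) = (1 - y) / (1 - x * y) := by rw [one_sub_div hxy1]; ring
  rw [h1, h2]
  field_simp
  ring

lemma mem_u {x y : ℝ} (hx : x ∈ Ioo (0:ℝ) 1) (hy : y ∈ Ioo (0:ℝ) 1) :
    x * (1 - y) / (1 - x * y) ∈ Ioo (0:ℝ) 1 := by
  obtain ⟨hx0, hx1⟩ := hx; obtain ⟨hy0, hy1⟩ := hy
  have hxy : x * y < 1 := by nlinarith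
  have hd : (0:ℝ) < 1 - x * y := by linarith
  constructor
  · exact div_pos (mul_pos hx0 (by linarith)) hd
  · rw [div_lt_one hd]; nlinarith

lemma mem_xy {x y : ℝ} (hx : x ∈ Ioo (0:ℝ) 1) (hy : y ∈ Ioo (0:ℝ) 1) :
    x * y ∈ Ioo (0:ℝ) 1 := ⟨mul_pos hx.1 hy.1, by nlinarith [hx.1, hx.2, hy.1, hy.2]⟩

lemma abel_identity {x y : ℝ} (hx : x ∈ Ioo (0:ℝ) 1) (hy : y ∈ Ioo (0:ℝ) 1) :
    rogersL x + rogersL y = rogersL (x * y) + rogersL (x * (1 - y) / (1 - x * y))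
      + rogersL (y * (1 - x) / (1 - x * y)) := by
  set G : ℝ → ℝ := fun t => rogersL t - rogersL (t * y) - rogersL (t * (1 - y) / (1 - t * y))
    - rogersL (y * (1 - t) / (1 - t * y)) with hG
  obtain ⟨hy0, hy1⟩ := hy
  have h1y : (0:ℝ) < 1 - y := by linarith
  have hderiv : ∀ t ∈ Ioo (0:ℝ) 1, HasDerivAt G 0 t := by
    intro t ht
    obtain ⟨ht0, ht1⟩ := ht
    have h1t : (0:ℝ) < 1 - t := by linarith
    have hty : t * y < 1 := by nlinarith
    have hd0 : (0:ℝ) < 1 - t * y := by linarith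
    have hu := mem_u ⟨ht0, ht1⟩ ⟨hy0, hy1⟩
    have hv := mem_u ⟨hy0, hy1⟩ ⟨ht0, ht1⟩
    have hv' : y * (1 - t) / (1 - t * y) ∈ Ioo (0:ℝ) 1 := by
      rwa [show y * (1 - t) / (1 - t * y) = y * (1 - t) / (1 - y * t) by rw [mul_comm y t]]
    have hxy := mem_xy ⟨ht0, ht1⟩ ⟨hy0, hy1⟩
    -- derivatives of inner maps
    have hden : HasDerivAt (fun t : ℝ => 1 - t * y) (-y) t := by
      simpa using ((hasDerivAt_mul_const y).const_sub 1)
    have hnum_u : HasDerivAt (fun t : ℝ => t * (1 - y)) (1 - y) t := hasDerivAt_mul_const _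
    have hnum_v : HasDerivAt (fun t : ℝ => y * (1 - t)) (y * (-1)) t := by
      exact (((hasDerivAt_id t).const_sub 1)).const_mul y
    have hU : HasDerivAt (fun t : ℝ => t * (1 - y) / (1 - t * y))
        (((1 - y) * (1 - t * y) - t * (1 - y) * (-y)) / (1 - t * y) ^ 2) t :=
      hnum_u.div hden hd0.ne'
    have hV : HasDerivAt (fun t : ℝ => y * (1 - t) / (1 - t * y))
        ((y * (-1) * (1 - t * y) - y * (1 - t) * (-y)) / (1 - t * y) ^ 2) t :=
      hnum_v.div hden hd0.ne'
    have hA := hasDerivAt_rogersL ht0 ht1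
    have hB : HasDerivAt (fun t : ℝ => rogersL (t * y)) (Lder (t * y) * y) t :=
      by have := (hasDerivAt_rogersL hxy.1 hxy.2).comp t (hasDerivAt_mul_const y); exact this
    have hC : HasDerivAt (fun t : ℝ => rogersL (t * (1 - y) / (1 - t * y)))
        (Lder (t * (1 - y) / (1 - t * y)) *
          (((1 - y) * (1 - t * y) - t * (1 - y) * (-y)) / (1 - t * y) ^ 2)) t :=
      by have := (hasDerivAt_rogersL hu.1 hu.2).comp t hU; exact this
    have hD : HasDerivAt (fun t : ℝ => rogersL (y * (1 - t) / (1 - t * y)))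
        (Lder (y * (1 - t) / (1 - t * y)) *
          ((y * (-1) * (1 - t * y) - y * (1 - t) * (-y)) / (1 - t * y) ^ 2)) t :=
      by have := (hasDerivAt_rogersL hv'.1 hv'.2).comp t hV; exact this
    have htot := ((hA.sub hB).sub hC).sub hD
    have hzero : Lder t - Lder (t * y) * y
        - Lder (t * (1 - y) / (1 - t * y)) *
            (((1 - y) * (1 - t * y) - t * (1 - y) * (-y)) / (1 - t * y) ^ 2)
        - Lder (y * (1 - t) / (1 - t * y)) *
            ((y * (-1) * (1 - t * y) - y * (1 - t) * (-y)) / (1 - t * y) ^ 2) = 0 := by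
      unfold Lder
      have e1 : (1:ℝ) - t * (1 - y) / (1 - t * y) = (1 - t) / (1 - t * y) := by
        field_simp
        ring
      have e2 : (1:ℝ) - y * (1 - t) / (1 - t * y) = (1 - y) / (1 - t * y) := by
        rw [one_sub_div hd0.ne']
        ring
      rw [e1, e2, Real.log_mul ht0.ne' hy0.ne',
        Real.log_div (by positivity : t * (1 - y) ≠ 0) hd0.ne',
        Real.log_mul ht0.ne' h1y.ne',
        Real.log_div (by positivity : y * (1 - t) ≠ 0) hd0.ne',
        Real.log_mul hy0.ne' h1t.ne',
        Real.log_div h1t.ne' hd0.ne', Real.log_div h1y.ne' hd0.ne']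
      have := abel_alg t y (Real.log t) (Real.log y) (Real.log (1 - t)) (Real.log (1 - y))
        (Real.log (1 - t * y)) ht0.ne' h1t.ne' hy0.ne' h1y.ne' hd0.ne'
      rw [e1, e2] at this
      linear_combination this
    rw [← hzero]
    exact htot
  -- limit of G at 0 within Ioo 0 1
  have hmapxy : Tendsto (fun t : ℝ => t * y) (𝓝[Ioo (0:ℝ) 1] 0) (𝓝[Ioo (0:ℝ) 1] 0) := by
    rw [tendsto_nhdsWithin_iff]
    constructor
    · have hc : Continuous (fun t : ℝ => t * y) := continuous_id.mul continuous_const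
      have := hc.tendsto (0:ℝ)
      simp only [zero_mul] at this
      exact this.mono_left nhdsWithin_le_nhds
    · filter_upwards [self_mem_nhdsWithin] with t ht
      exact mem_xy ht ⟨hy0, hy1⟩
  have hmapu : Tendsto (fun t : ℝ => t * (1 - y) / (1 - t * y))
      (𝓝[Ioo (0:ℝ) 1] 0) (𝓝[Ioo (0:ℝ) 1] 0) := by
    rw [tendsto_nhdsWithin_iff]
    constructor
    · have hc : ContinuousAt (fun t : ℝ => t * (1 - y) / (1 - t * y)) 0 :=
        ContinuousAt.div (by fun_prop) (by fun_prop) (by norm_num)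
      have := hc.tendsto
      simp only [zero_mul, sub_zero, zero_div] at this
      exact this.mono_left nhdsWithin_le_nhds
    · filter_upwards [self_mem_nhdsWithin] with t ht
      exact mem_u ht ⟨hy0, hy1⟩
  have hmapv : Tendsto (fun t : ℝ => y * (1 - t) / (1 - t * y))
      (𝓝[Ioo (0:ℝ) 1] 0) (𝓝 y) := by
    have hc : ContinuousAt (fun t : ℝ => y * (1 - t) / (1 - t * y)) 0 :=
      ContinuousAt.div (by fun_prop) (by fun_prop) (by norm_num)
    have := hc.tendsto
    simp only [zero_mul, sub_zero, mul_one, div_one] at this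
    exact this.mono_left nhdsWithin_le_nhds
  have hlim : Tendsto G (𝓝[Ioo (0:ℝ) 1] 0) (𝓝 (0 - 0 - 0 - rogersL y)) := by
    apply Tendsto.sub
    apply Tendsto.sub
    apply Tendsto.sub
    · exact rogersL_tendsto_zero
    · exact rogersL_tendsto_zero.comp hmapxy
    · exact rogersL_tendsto_zero.comp hmapu
    · exact ((hasDerivAt_rogersL hy0 hy1).continuousAt.tendsto).comp hmapv
  have hx' := hx
  have hconst : ∀ w ∈ Ioo (0:ℝ) 1, G w = G x := fun w hw => const_on_Ioo hderiv hw hx'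
  have hlim2 : Tendsto G (𝓝[Ioo (0:ℝ) 1] 0) (𝓝 (G x)) := by
    apply Tendsto.congr' ?_ tendsto_const_nhds
    filter_upwards [self_mem_nhdsWithin] with w hw
    exact (hconst w hw).symm
  haveI := neBot_Ioo_zero
  have hGx := tendsto_nhds_unique hlim2 hlim
  have : rogersL x - rogersL (x * y) - rogersL (x * (1 - y) / (1 - x * y))
      - rogersL (y * (1 - x) / (1 - x * y)) = -rogersL y := by
    rw [hG] at hGx
    simpa using hGx
  linarith [this]

/-- A known two-term dilogarithm identity over ℚ(√5) with coefficient 4. -/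
theorem sqrt5_two_term :
    rogersL (4 * Real.sqrt 5 - 8) + 4 * rogersL (Real.sqrt 5 - 2) =
      Real.pi ^ 2 / 3 := by
  set s : ℝ := Real.sqrt 5 with hsdef
  have hs : s ^ 2 = 5 := Real.sq_sqrt (by norm_num)
  have hs0 : 0 ≤ s := Real.sqrt_nonneg 5
  have hs2 : 2 < s := by nlinarith
  have hs94 : s < 9/4 := by nlinarith
  have hX : s - 2 ∈ Ioo (0:ℝ) 1 := ⟨by linarith, by linarith⟩
  have hP : (3 - s)/2 ∈ Ioo (0:ℝ) 1 := ⟨by linarith, by linarith⟩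
  have hH : (1:ℝ)/2 ∈ Ioo (0:ℝ) 1 := by norm_num
  have hQ : 9 - 4*s ∈ Ioo (0:ℝ) 1 := ⟨by linarith, by linarith⟩
  -- Abel at (x, x) with x = √5 - 2
  have A1 := abel_identity hX hX
  rw [show (s - 2) * (s - 2) = 9 - 4*s from by linear_combination hs] at A1
  rw [show (s - 2) * (1 - (s - 2)) / (1 - (9 - 4*s)) = (3 - s)/4 from by
    rw [div_eq_iff (by norm_num; linarith : (1:ℝ) - (9 - 4*s) ≠ 0)]
    ring] at A1
  -- Abel at ((3-√5)/2, 1/2)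
  have A2 := abel_identity hP hH
  rw [show (3 - s)/2 * (1/2 : ℝ) = (3 - s)/4 from by ring] at A2
  rw [show (3 - s)/2 * (1 - 1/2) / (1 - (3 - s)/4) = s - 2 from by
    rw [show (1:ℝ) - (3 - s)/4 = (1 + s)/4 from by ring,
      div_eq_iff (by positivity : ((1:ℝ) + s)/4 ≠ 0)]
    linear_combination (-1/4 : ℝ) * hs] at A2
  rw [show (1/2 : ℝ) * (1 - (3 - s)/2) / (1 - (3 - s)/4) = (3 - s)/2 from by
    rw [show (1:ℝ) - (3 - s)/4 = (1 + s)/4 from by ring,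
      div_eq_iff (by positivity : ((1:ℝ) + s)/4 ≠ 0)]
    linear_combination (1/8 : ℝ) * hs] at A2
  -- Euler reflections
  have E1 := euler_reflection hQ
  rw [show (1:ℝ) - (9 - 4*s) = 4*s - 8 from by ring] at E1
  have E2 := euler_reflection hH
  rw [show (1:ℝ) - 1/2 = 1/2 from by norm_num] at E2
  have hgoal : 4 * s - 8 = 4 * Real.sqrt 5 - 8 := by rw [hsdef]
  rw [← hgoal]
  linarith [A1, A2, E1, E2]
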